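/- arXiv:2305.05405 — 5 statements merged into one kernel-verified Lean document; each statement's English description precedes it below -/
import Mathlib

section
/- In a rooted cactus graph, every simple cycle has exactly two edges incident to its topmost vertex, and these two edges (the 'associated pair' of the cycle) are exactly the edges of the cycle closest to the root; moreover every edge of the graph belongs to at most one such associated pair. -/
/-!
Two distinct vertices `v`, `a` of a cycle `c` at minimal distance from `r` can be joined, along
shortest paths from `r`, by a path all of whose inner vertices are strictly closer to `r` than
any vertex of `c`. Closing it up with an arc of `c` from `v` to `a` gives a second cycle that
shares an edge with `c` but not all of its edges, which a cactus forbids. So the topmost vertex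
of a cycle is unique. Two cycles of a cactus sharing an edge have the same edges, hence the same
vertices and the same topmost vertex.
-/

def IsCactus {V : Type*} (G : SimpleGraph V) : Prop :=
  G.Connected ∧
    ∀ {u v : V} (c : G.Walk u u) (d : G.Walk v v), c.IsCycle → d.IsCycle →
      ∀ e, e ∈ c.edges → e ∈ d.edges → ∀ f, (f ∈ c.edges ↔ f ∈ d.edges)

/-- Distance of an edge to the root `r`: the smaller of the distances of its endpoints. -/
noncomputable def edgeDist {V : Type*} (G : SimpleGraph V) (r : V) : Sym2 V → ℕ :=
  Sym2.lift ⟨fun a b => min (G.dist r a) (G.dist r b), fun a b => min_comm _ _⟩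

section

open SimpleGraph Walk

variable {V : Type*} {G : SimpleGraph V}

namespace SimpleGraph.Walk

lemma mem_support_iff_of_mem_edges_iff {u v : V} {p : G.Walk u u} {q : G.Walk v v}
    (hp : ¬p.Nil) (hq : ¬q.Nil) (h : ∀ e, e ∈ p.edges ↔ e ∈ q.edges) (w : V) :
    w ∈ p.support ↔ w ∈ q.support := by
  simp only [mem_support_iff_exists_mem_edges_of_not_nil hp,
    mem_support_iff_exists_mem_edges_of_not_nil hq, h]

lemma IsCycle.card_filter_mem_edges [DecidableEq V] {u v : V} {c : G.Walk u u}
    (hc : c.IsCycle) (hv : v ∈ c.support) :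
    (c.edges.toFinset.filter (fun e => v ∈ e)).card = 2 := by
  have hset : ((c.edges.toFinset.filter (fun e => v ∈ e) : Finset (Sym2 V)) : Set (Sym2 V)) =
      c.toSubgraph.spanningCoe.incidenceSet v := by
    ext e
    simp [incidenceSet, Subgraph.edgeSet_spanningCoe]
  rw [← Set.ncard_coe_finset, hset, Set.ncard_def, Set.encard,
    ENat.card_congr (c.toSubgraph.spanningCoe.incidenceSetEquivNeighborSet v)]
  exact hc.ncard_neighborSet_toSubgraph_eq_two hv

lemma dist_lt_of_length_eq_dist {r x w : V} (p : G.Walk r x) (hp : p.length = G.dist r x)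
    (hw : w ∈ p.support) (hwx : w ≠ x) : G.dist r w < G.dist r x := by
  classical
  calc G.dist r w ≤ (p.takeUntil w hw).length := dist_le _
    _ < p.length := length_takeUntil_lt_length hw hwx
    _ = G.dist r x := hp

lemma exists_mem_dist_lt_of_length_eq_dist {r x : V} (p : G.Walk r x)
    (hp : p.length = G.dist r x) {e : Sym2 V} (he : e ∈ p.edges) :
    ∃ w ∈ e, G.dist r w < G.dist r x := by
  induction e with
  | h y z =>
    have hyz : y ≠ z := (p.adj_of_mem_edges he).ne
    by_cases hyx : y = x
    · subst hyx
      exact ⟨z, Sym2.mem_mk_right y z,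
        p.dist_lt_of_length_eq_dist hp (p.snd_mem_support_of_mem_edges he) hyz.symm⟩
    · exact ⟨y, Sym2.mem_mk_left y z,
        p.dist_lt_of_length_eq_dist hp (p.fst_mem_support_of_mem_edges he) hyx⟩

end SimpleGraph.Walk

section edgeDist

variable {r x : V} {e : Sym2 V} {k : ℕ}

lemma le_edgeDist_iff : k ≤ edgeDist G r e ↔ ∀ x ∈ e, k ≤ G.dist r x := by
  induction e with
  | h y z => simp [edgeDist]

lemma edgeDist_le_of_mem (hx : x ∈ e) : edgeDist G r e ≤ G.dist r x :=
  le_edgeDist_iff.1 le_rfl x hx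

lemma exists_mem_dist_eq_edgeDist : ∃ x ∈ e, G.dist r x = edgeDist G r e := by
  induction e with
  | h y z =>
    rcases min_choice (G.dist r y) (G.dist r z) with h | h
    · exact ⟨y, Sym2.mem_mk_left y z, h.symm⟩
    · exact ⟨z, Sym2.mem_mk_right y z, h.symm⟩

end edgeDist

lemma IsCactus.eq_of_isPath_of_disjoint {u v a : V} {c : G.Walk u u} (hG : IsCactus G)
    (hc : c.IsCycle) (hv : v ∈ c.support) (ha : a ∈ c.support) {s : G.Walk a v} (hs : s.IsPath)
    (hs_edges : ∀ e ∈ s.edges, e ∉ c.edges)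
    (hs_support : ∀ w ∈ s.support.tail, w ∈ c.support → w = v) : v = a := by
  classical
  by_contra hne
  set c' := c.rotate v hv
  have hc'_edges : ∀ {e}, e ∈ c'.edges → e ∈ c.edges := fun he =>
    (c.rotate_edges v hv).perm.mem_iff.1 he
  have ha' : a ∈ c'.support := (c.mem_support_rotate_iff v hv).2 ha
  set q := c'.takeUntil a ha'
  have hq : q.IsPath := (hc.rotate hv).isPath_takeUntil ha'
  have hq_edges : ∀ {e}, e ∈ q.edges → e ∈ c'.edges := fun he =>
    c'.edges_takeUntil_subset_edges ha' he
  have hd : (q.append s).IsCycle := by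
    rw [isCycle_def, isTrail_append, tail_support_append, List.nodup_append']
    refine ⟨⟨hq.isTrail, hs.isTrail, fun e heq hes => hs_edges e hes (hc'_edges (hq_edges heq))⟩,
      fun h => hne ?_, hq.support_nodup.tail, hs.support_nodup.tail, fun w hwq hws => ?_⟩
    · have := congrArg length h
      rw [length_append, length_nil] at this
      exact eq_of_length_eq_zero (by omega : q.length = 0)
    · have hwc : w ∈ c.support := (c.mem_support_rotate_iff v hv).1
        (c'.support_takeUntil_subset_support ha' (List.mem_of_mem_tail hwq))
      obtain rfl := hs_support w hws hwc
      have := hq.support_nodup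
      rw [← cons_tail_support, List.nodup_cons] at this
      exact this.1 hwq
  obtain ⟨e, he, -⟩ := (mem_support_iff_exists_mem_edges_of_not_nil (not_nil_of_ne hne)).1
    q.start_mem_support
  obtain ⟨f, hf, -⟩ := (mem_support_iff_exists_mem_edges_of_not_nil
    (not_nil_of_ne (Ne.symm hne))).1 s.start_mem_support
  have hsame := hG.2 c' _ (hc.rotate hv) hd e (hq_edges he) (by simp [he])
  exact hs_edges f hf (hc'_edges ((hsame f).2 (by simp [hf])))

lemma IsCactus.eq_of_dist_le {u v a : V} {c : G.Walk u u} (hG : IsCactus G) (hc : c.IsCycle)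
    (r : V) (hv : v ∈ c.support) (ha : a ∈ c.support)
    (hv_top : ∀ w ∈ c.support, G.dist r v ≤ G.dist r w)
    (ha_top : ∀ w ∈ c.support, G.dist r a ≤ G.dist r w) : v = a := by
  classical
  have hva : G.dist r a = G.dist r v := le_antisymm (ha_top v hv) (hv_top a ha)
  obtain ⟨p, -, hp⟩ := hG.1.exists_path_of_dist r v
  obtain ⟨q, -, hq⟩ := hG.1.exists_path_of_dist r a
  set s := (q.reverse.append p).bypass
  have hs_edges : ∀ e ∈ s.edges, ∃ w ∈ e, G.dist r w < G.dist r v := by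
    intro e he
    have := edges_bypass_subset_edges _ he
    rw [edges_append, edges_reverse, List.mem_append, List.mem_reverse] at this
    rcases this with he | he
    · exact hva ▸ q.exists_mem_dist_lt_of_length_eq_dist hq he
    · exact p.exists_mem_dist_lt_of_length_eq_dist hp he
  have hs_support : ∀ w ∈ s.support, w = a ∨ w = v ∨ G.dist r w < G.dist r v := by
    intro w hw
    have := support_bypass_subset_support _ hw
    rw [mem_support_append_iff, support_reverse, List.mem_reverse] at this
    rcases this with hw | hw
    · by_cases hwa : w = a
      · exact .inl hwa
      · exact .inr (.inr (hva ▸ q.dist_lt_of_length_eq_dist hq hw hwa))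
    · by_cases hwv : w = v
      · exact .inr (.inl hwv)
      · exact .inr (.inr (p.dist_lt_of_length_eq_dist hp hw hwv))
  have hs : s.IsPath := bypass_isPath _
  refine hG.eq_of_isPath_of_disjoint hc hv ha hs (fun e he hec => ?_) (fun w hw hwc => ?_)
  · obtain ⟨w, hwe, hw⟩ := hs_edges e he
    exact hw.not_ge (hv_top w (mem_support_of_mem_edges hec hwe))
  · have ha_tail : a ∉ s.support.tail := by
      have := hs.support_nodup
      rw [← cons_tail_support, List.nodup_cons] at this
      exact this.1
    rcases hs_support w (List.mem_of_mem_tail hw) with rfl | rfl | hlt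
    · exact absurd hw ha_tail
    · rfl
    · exact absurd (hv_top w hwc) hlt.not_ge

lemma IsCactus.mem_iff_forall_edgeDist_le {u v r : V} {c : G.Walk u u} (hG : IsCactus G)
    (hc : c.IsCycle) (hv : v ∈ c.support) (hv_top : ∀ w ∈ c.support, G.dist r v ≤ G.dist r w)
    {e : Sym2 V} (he : e ∈ c.edges) :
    v ∈ e ↔ ∀ f ∈ c.edges, edgeDist G r e ≤ edgeDist G r f := by
  refine ⟨fun hve f hf => ?_, fun h_min => ?_⟩
  · exact (edgeDist_le_of_mem hve).trans
      (le_edgeDist_iff.2 fun x hx => hv_top x (mem_support_of_mem_edges hf hx))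
  · obtain ⟨f, hf, hvf⟩ := (mem_support_iff_exists_mem_edges_of_not_nil hc.not_nil).1 hv
    obtain ⟨x, hxe, hx⟩ : ∃ x ∈ e, G.dist r x = edgeDist G r e := exists_mem_dist_eq_edgeDist
    have hxv : G.dist r x ≤ G.dist r v := hx ▸ (h_min f hf).trans (edgeDist_le_of_mem hvf)
    obtain rfl := hG.eq_of_dist_le hc r hv (mem_support_of_mem_edges he hxe) hv_top
      fun w hw => hxv.trans (hv_top w hw)
    exact hxe

lemma IsCactus.filter_mem_edges_eq [DecidableEq V] {u u' v v' r : V} {c : G.Walk u u}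
    {d : G.Walk u' u'} (hG : IsCactus G) (hc : c.IsCycle) (hd : d.IsCycle) (hv : v ∈ c.support)
    (hv_top : ∀ w ∈ c.support, G.dist r v ≤ G.dist r w)
    (hv'_top : ∀ w ∈ d.support, G.dist r v' ≤ G.dist r w)
    {e : Sym2 V} (hec : e ∈ c.edges) (hed : e ∈ d.edges) (hv'e : v' ∈ e) :
    c.edges.toFinset.filter (fun e => v ∈ e) = d.edges.toFinset.filter (fun e => v' ∈ e) := by
  have hcd := hG.2 c d hc hd e hec hed
  have hsupport := mem_support_iff_of_mem_edges_iff hc.not_nil hd.not_nil hcd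
  obtain rfl := hG.eq_of_dist_le hc r hv (mem_support_of_mem_edges hec hv'e) hv_top
    fun w hw => hv'_top w ((hsupport w).1 hw)
  ext f
  simp [hcd f]

end

/-- In a rooted cactus graph, every simple cycle has exactly two edges incident to its
topmost vertex; these are exactly the edges of the cycle closest to the root, and every
edge belongs to at most one such associated pair. -/
theorem stmt2 {V : Type*} [DecidableEq V] (G : SimpleGraph V) (hG : IsCactus G) (r : V)
    {u : V} (c : G.Walk u u) (hc : c.IsCycle)
    (v : V) (hvc : v ∈ c.support) (hvtop : ∀ w ∈ c.support, G.dist r v ≤ G.dist r w) :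
    (c.edges.toFinset.filter (fun e => v ∈ e)).card = 2 ∧
    (∀ e ∈ c.edges, (v ∈ e ↔ ∀ f ∈ c.edges, edgeDist G r e ≤ edgeDist G r f)) ∧
    (∀ {u' : V} (d : G.Walk u' u'), d.IsCycle →
      ∀ v' ∈ d.support, (∀ w ∈ d.support, G.dist r v' ≤ G.dist r w) →
      (∃ e ∈ c.edges, v ∈ e ∧ e ∈ d.edges ∧ v' ∈ e) →
      c.edges.toFinset.filter (fun e => v ∈ e) =
        d.edges.toFinset.filter (fun e => v' ∈ e)) := by
  refine ⟨hc.card_filter_mem_edges hvc,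
    fun e he => hG.mem_iff_forall_edgeDist_le hc hvc hvtop he, ?_⟩
  rintro u' d hd v' - hv'top ⟨e, hec, -, hed, hv'e⟩
  exact hG.filter_mem_edges_eq hc hd hvc hvtop hv'top hec hed hv'e
end

section
/- Let G be a cactus graph with skeleton SK defined by a set of border vertices. Then every connected component of G minus the edges of SK contains exactly one skeleton vertex, provided it contains at least one vertex adjacent to SK. -/
def Skeleton {V : Type*} (G : SimpleGraph V) (W : Set V) : Set (Sym2 V) :=
  {e | ∃ u v, u ∈ W ∧ v ∈ W ∧ u ≠ v ∧ ∃ p : G.Walk u v, p.IsPath ∧ e ∈ p.edges}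

def SkeletonVertex {V : Type*} (G : SimpleGraph V) (W : Set V) (x : V) : Prop :=
  ∃ e ∈ Skeleton G W, x ∈ e

/-!
If two distinct skeleton vertices were joined by a path avoiding the skeleton, they would also be
joined by a path inside the skeleton (through the border vertices the skeleton edges lead to), and
two distinct paths with the same ends contain a cycle using edges of both. A path between border
vertices through the skeleton edge of that cycle can be rerouted along the cycle through its
non-skeleton edge, which is therefore a skeleton edge after all. Existence is immediate: a vertex
next to a skeleton vertex either lies on a skeleton edge or reaches that vertex by a non-skeleton
edge.
-/

namespace SimpleGraph.Walk

variable {V : Type*} {G : SimpleGraph V}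

lemma exists_eq_append_first_mem (S : Set V) :
    ∀ {u v : V} (p : G.Walk u v), (∃ t ∈ p.support, t ∈ S) →
      ∃ x, ∃ (p₁ : G.Walk u x) (p₂ : G.Walk x v), p = p₁.append p₂ ∧ x ∈ S ∧
        ∀ t ∈ p₁.support, t ∈ S → t = x
  | u, _, nil, ⟨t, ht, htS⟩ => by
    obtain rfl : t = u := by simpa using ht
    exact ⟨t, nil, nil, rfl, htS, by simp⟩
  | u, _, cons h p, ⟨t, ht, htS⟩ => by
    by_cases hu : u ∈ S
    · exact ⟨u, nil, cons h p, rfl, hu, by simp⟩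
    have ht' : t ∈ p.support := by
      rcases (by simpa using ht : t = u ∨ t ∈ p.support) with rfl | ht'
      exacts [absurd htS hu, ht']
    obtain ⟨x, p₁, p₂, rfl, hx, hfirst⟩ := exists_eq_append_first_mem S p ⟨t, ht', htS⟩
    refine ⟨x, cons h p₁, p₂, rfl, hx, fun t ht htS => ?_⟩
    rcases (by simpa using ht : t = u ∨ t ∈ p₁.support) with rfl | ht
    exacts [absurd htS hu, hfirst t ht htS]

lemma exists_eq_append_last_mem (S : Set V) {u v : V} (p : G.Walk u v)
    (h : ∃ t ∈ p.support, t ∈ S) :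
    ∃ y, ∃ (p₁ : G.Walk u y) (p₂ : G.Walk y v), p = p₁.append p₂ ∧ y ∈ S ∧
      ∀ t ∈ p₂.support, t ∈ S → t = y := by
  obtain ⟨y, q₁, q₂, hq, hy, hlast⟩ :=
    exists_eq_append_first_mem S p.reverse (by simpa using h)
  refine ⟨y, q₂.reverse, q₁.reverse, ?_, hy, by simpa using hlast⟩
  rw [← reverse_append, ← hq, reverse_reverse]

lemma exists_mem_edges_of_ne {u v : V} (p : G.Walk u v) (h : u ≠ v) : ∃ e, e ∈ p.edges :=
  List.exists_mem_of_ne_nil _ (edges_eq_nil.not.mpr (not_nil_of_ne h))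

lemma IsPath.append_of_forall_mem_support {u x v : V} {p : G.Walk u x} {q : G.Walk x v}
    (hp : p.IsPath) (hq : q.IsPath) (h : ∀ t ∈ p.support, t ∈ q.support → t = x) :
    (p.append q).IsPath := by
  refine IsPath.mk' ?_
  rw [support_append, List.nodup_append']
  refine ⟨hp.support_nodup, hq.support_nodup.sublist q.support.tail_sublist, fun t hp' hq' => ?_⟩
  obtain rfl := h t hp' (List.mem_of_mem_tail hq')
  have := hq.support_nodup
  rw [← q.cons_tail_support, List.nodup_cons] at this
  exact this.1 hq'

lemma IsCycle.exists_isPath_mem_edges {w x y : V} {C : G.Walk w w} (hC : C.IsCycle)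
    (hx : x ∈ C.support) (hy : y ∈ C.support) (hxy : x ≠ y) {g : Sym2 V} (hg : g ∈ C.edges) :
    ∃ A : G.Walk x y, A.IsPath ∧ A.support ⊆ C.support ∧ g ∈ A.edges := by
  classical
  set C' := C.rotate x hx
  have hC' : C'.IsCycle := hC.rotate hx
  have hy' : y ∈ C'.support := (mem_support_rotate_iff C x hx).mpr hy
  have hsub : C'.support ⊆ C.support := fun t ht => (mem_support_rotate_iff C x hx).mp ht
  have hsplit := C'.take_spec hy'
  have htake : ¬ (C'.takeUntil y hy').Nil := not_nil_of_ne hxy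
  have hdrop : ¬ (C'.dropUntil y hy').Nil := not_nil_of_ne hxy.symm
  rw [← hsplit] at hC'
  have hg' : g ∈ (C'.takeUntil y hy').edges ∨ g ∈ (C'.dropUntil y hy').edges := by
    rw [← List.mem_append, ← edges_append, hsplit]
    exact (rotate_edges C x hx).perm.mem_iff.mpr hg
  rcases hg' with hg' | hg'
  · refine ⟨_, hC'.isPath_of_append_left hdrop, fun t ht => ?_, hg'⟩
    exact hsub (C'.support_takeUntil_subset_support hy' ht)
  · refine ⟨_, (hC'.isPath_of_append_right htake).reverse, ?_, by simpa using hg'⟩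
    intro t ht
    exact hsub (C'.support_dropUntil_subset_support hy' (by simpa using ht))

theorem IsPath.exists_isPath_mem_edges_of_isCycle {u v w : V} {p : G.Walk u v} (hp : p.IsPath)
    {C : G.Walk w w} (hC : C.IsCycle) {f g : Sym2 V} (hfp : f ∈ p.edges) (hfC : f ∈ C.edges)
    (hg : g ∈ C.edges) : ∃ P : G.Walk u v, P.IsPath ∧ g ∈ P.edges := by
  classical
  induction f using Sym2.ind with | _ a b
  have ha := p.fst_mem_support_of_mem_edges hfp
  have hb := p.snd_mem_support_of_mem_edges hfp
  have haC := C.fst_mem_support_of_mem_edges hfC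
  have hbC := C.snd_mem_support_of_mem_edges hfC
  -- Cut `p` at its first and last vertices `x`, `y` on `C`; the part between them is then
  -- replaced by the arc of `C` from `x` to `y` through `g`.
  obtain ⟨x, pre, rest, rfl, hxC, hpre⟩ :=
    exists_eq_append_first_mem {t | t ∈ C.support} p ⟨a, ha, haC⟩
  obtain ⟨y, mid, suf, rfl, hyC, hsuf⟩ := exists_eq_append_last_mem {t | t ∈ C.support} rest
    ⟨x, rest.start_mem_support, hxC⟩
  have hpre_path : pre.IsPath := hp.of_append_left
  have hmid_path : mid.IsPath := hp.of_append_right.of_append_left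
  have hsuf_path : suf.IsPath := hp.of_append_right.of_append_right
  have hxy : x ≠ y := by
    rintro rfl
    obtain rfl : mid = Walk.nil := (isPath_iff_nil.mp hmid_path).eq_nil
    have hmeet : ∀ t ∈ (pre.append (Walk.nil.append suf)).support, t ∈ C.support → t = x := by
      intro t ht htC
      rcases (by simpa using ht : t ∈ pre.support ∨ t ∈ suf.support) with ht | ht
      exacts [hpre t ht htC, hsuf t ht htC]
    exact (C.adj_of_mem_edges hfC).ne ((hmeet a ha haC).trans (hmeet b hb hbC).symm)
  have hdisj : ∀ t ∈ pre.support, t ∉ suf.support := by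
    intro t htpre htsuf
    by_cases hty : t = y
    · subst hty
      exact hxy (hpre t htpre hyC).symm
    have hnodup := hp.support_nodup
    rw [support_append, List.nodup_append'] at hnodup
    refine hnodup.2.2 htpre ((mem_tail_support_append_iff mid suf).mpr (Or.inr ?_))
    rw [← suf.cons_tail_support] at htsuf
    exact (List.mem_cons.mp htsuf).resolve_left hty
  obtain ⟨A, hA, hAC, hgA⟩ := hC.exists_isPath_mem_edges hxC hyC hxy hg
  refine ⟨pre.append (A.append suf), ?_, by simp [hgA]⟩
  refine hpre_path.append_of_forall_mem_support
    (hA.append_of_forall_mem_support hsuf_path fun t htA htsuf => hsuf t htsuf (hAC htA))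
    fun t htpre ht => ?_
  rcases (mem_support_append_iff A suf).mp ht with htA | htsuf
  exacts [hpre t htpre (hAC htA), absurd htsuf (hdisj t htpre)]

end SimpleGraph.Walk

open SimpleGraph Walk

section Skeleton

variable {V : Type*} {G : SimpleGraph V} {W : Set V}

lemma SkeletonVertex.exists_walk_mem_skeleton {z : V} (hz : SkeletonVertex G W z) :
    ∃ w ∈ W, ∃ r : G.Walk z w, ∀ e ∈ r.edges, e ∈ Skeleton G W := by
  classical
  obtain ⟨e, ⟨u, v, hu, hv, huv, p, hp, hep⟩, hze⟩ := hz
  have hz : z ∈ p.support := by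
    obtain ⟨z', rfl⟩ := Sym2.mem_iff_exists.mp hze
    exact p.fst_mem_support_of_mem_edges hep
  refine ⟨u, hu, (p.takeUntil z hz).reverse, fun e' he' => ?_⟩
  rw [edges_reverse, List.mem_reverse] at he'
  exact ⟨u, v, hu, hv, huv, p, hp, p.edges_takeUntil_subset_edges hz he'⟩

lemma SkeletonVertex.exists_isPath_mem_skeleton {z z' : V} (hz : SkeletonVertex G W z)
    (hz' : SkeletonVertex G W z') (h : G.Reachable z z') :
    ∃ s : G.Walk z z', s.IsPath ∧ ∀ e ∈ s.edges, e ∈ Skeleton G W := by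
  classical
  obtain ⟨w, hw, r, hr⟩ := hz.exists_walk_mem_skeleton
  obtain ⟨w', hw', r', hr'⟩ := hz'.exists_walk_mem_skeleton
  have hm : ∃ m : G.Walk w w', ∀ e ∈ m.edges, e ∈ Skeleton G W := by
    by_cases hww' : w = w'
    · subst hww'
      exact ⟨nil, by simp⟩
    obtain ⟨m, hm⟩ := (r.reverse.reachable.trans (h.trans r'.reachable)).exists_isPath
    exact ⟨m, fun e he => ⟨w, w', hw, hw', hww', m, hm, he⟩⟩
  obtain ⟨m, hm⟩ := hm
  let s := r.append (m.append r'.reverse)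
  have hs : ∀ e ∈ s.edges, e ∈ Skeleton G W := by
    intro e he
    simp only [s, edges_append, edges_reverse, List.mem_append, List.mem_reverse] at he
    rcases he with he | he | he
    exacts [hr e he, hm e he, hr' e he]
  exact ⟨s.bypass, s.bypass_isPath, fun e he => hs e (s.edges_bypass_subset_edges he)⟩

lemma SkeletonVertex.eq_of_reachable_deleteEdges {z z' : V} (hz : SkeletonVertex G W z)
    (hz' : SkeletonVertex G W z') (h : (G.deleteEdges (Skeleton G W)).Reachable z z') :
    z = z' := by
  by_contra hne
  obtain ⟨q₀, hq₀⟩ := h.exists_isPath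
  let q := q₀.mapLe (G.deleteEdges_le _)
  have hq : q.IsPath := (isPath_mapLe _).mpr hq₀
  have hqS : ∀ e ∈ q.edges, e ∉ Skeleton G W := by
    intro e he
    rw [edges_mapLe_eq_edges] at he
    have := q₀.edges_subset_edgeSet he
    rw [edgeSet_deleteEdges] at this
    exact this.2
  obtain ⟨s, hs, hsS⟩ := hz.exists_isPath_mem_skeleton hz' q.reachable
  have hqs : q ≠ s := by
    rintro rfl
    obtain ⟨e, he⟩ := q.exists_mem_edges_of_ne hne
    exact hqS e he (hsS e he)
  obtain ⟨a, b, q', s', hq', hs', hcyc⟩ := hq.exists_isCycle_of_ne hs hqs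
  have hab : a ≠ b := by
    rintro rfl
    obtain rfl := (isPath_iff_nil.mp (isPath_of_isSubwalk hq' hq)).eq_nil
    obtain rfl := (isPath_iff_nil.mp (isPath_of_isSubwalk hs' hs)).eq_nil
    exact not_isCycle_nil hcyc
  obtain ⟨g, hgq'⟩ := q'.exists_mem_edges_of_ne hab
  obtain ⟨f, hfs'⟩ := s'.exists_mem_edges_of_ne hab
  obtain ⟨u, v, hu, hv, huv, p, hp, hfp⟩ := hsS f (hs'.edges_subset hfs')
  obtain ⟨P, hP, hgP⟩ :=
    hp.exists_isPath_mem_edges_of_isCycle hcyc (g := g) hfp (by simp [hfs']) (by simp [hgq'])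
  exact hqS g (hq'.edges_subset hgq') ⟨u, v, hu, hv, huv, P, hP, hgP⟩

lemma exists_skeletonVertex_reachable_deleteEdges {x y : V} (hy : SkeletonVertex G W y)
    (hxy : x = y ∨ G.Adj x y) :
    ∃ z, (G.deleteEdges (Skeleton G W)).Reachable x z ∧ SkeletonVertex G W z := by
  rcases hxy with rfl | hxy
  · exact ⟨x, .rfl, hy⟩
  by_cases hS : s(x, y) ∈ Skeleton G W
  · exact ⟨x, .rfl, s(x, y), hS, Sym2.mem_mk_left x y⟩
  · exact ⟨y, (deleteEdges_adj.mpr ⟨hxy, hS⟩).reachable, hy⟩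

end Skeleton

theorem stmt4_general {V : Type*} (G : SimpleGraph V)
    (W : Set V)
    (K : (G.deleteEdges (Skeleton G W)).ConnectedComponent)
    (htouch : ∃ x y, (G.deleteEdges (Skeleton G W)).connectedComponentMk x = K ∧
      SkeletonVertex G W y ∧ (x = y ∨ G.Adj x y)) :
    ∃! z : V, (G.deleteEdges (Skeleton G W)).connectedComponentMk z = K ∧
      SkeletonVertex G W z := by
  obtain ⟨x, y, rfl, hy, hxy⟩ := htouch
  obtain ⟨z, hxz, hz⟩ := exists_skeletonVertex_reachable_deleteEdges hy hxy
  have hzx := (ConnectedComponent.eq.mpr hxz).symm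
  refine ⟨z, ⟨hzx, hz⟩, fun z' ⟨hz'x, hz'⟩ => hz'.eq_of_reachable_deleteEdges hz ?_⟩
  exact ConnectedComponent.exact (hz'x.trans hzx.symm)

/-- Every connected component of `G` minus the skeleton edges that touches the skeleton
(contains a vertex equal or adjacent to a skeleton vertex) contains exactly one
skeleton vertex. -/
theorem stmt4 {V : Type*} (G : SimpleGraph V) (hG : IsCactus G)
    (W : Set V) (hWfin : W.Finite) (hW : 2 ≤ W.ncard)
    (K : (G.deleteEdges (Skeleton G W)).ConnectedComponent)
    (htouch : ∃ x y, (G.deleteEdges (Skeleton G W)).connectedComponentMk x = K ∧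
      SkeletonVertex G W y ∧ (x = y ∨ G.Adj x y)) :
    ∃! z : V, (G.deleteEdges (Skeleton G W)).connectedComponentMk z = K ∧
      SkeletonVertex G W z :=
  stmt4_general G W K htouch
end

section
/- For a rooted instance of the tollbooth problem on a graph (buyers each wanting a cheapest path from the root r to a destination vertex, buying iff the distance is at most their budget and paying the distance), there exists a revenue-maximizing nonnegative price assignment under which the distance from every vertex to the root lies in the set {0} ∪ {b_i : i a buyer}. -/
/-!
Round every root-distance up to the next value of `S = {0} ∪ {b i}` with a monotone map `g`
fixing `0`, and price each edge `uv` by `|g (d u) - g (d v)|`: the new distances are exactly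
`g ∘ d`, so a buyer who bought still buys and pays at least as much. Hence some price assignment
whose distances lie in `S` is optimal, and there are only finitely many such "potentials",
so one of them maximizes revenue; rounding it once more gives the witness.
-/

/-- Shortest-path distance from `r` to `v` under nonnegative edge prices `p`. -/
noncomputable def pdist {V : Type*} (H : SimpleGraph V) (p : Sym2 V → ℝ) (r v : V) : ℝ :=
  sInf {c : ℝ | ∃ q : H.Walk r v, q.IsPath ∧ c = (q.edges.map p).sum}

/-- Revenue of a price assignment: each buyer `i` buys a cheapest path from the root to
her destination `t i` iff its cost is at most her budget `b i`, paying that cost. -/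
noncomputable def revenue {V : Type*} (H : SimpleGraph V) (r : V)
    {ι : Type*} [Fintype ι] (t : ι → V) (b : ι → ℝ) (p : Sym2 V → ℝ) : ℝ :=
  ∑ i : ι, if pdist H p r (t i) ≤ b i then pdist H p r (t i) else 0

namespace Tollbooth

open SimpleGraph

section RoundUp

variable (S : Finset ℝ) (hS : S.Nonempty)

noncomputable def roundUp (x : ℝ) : ℝ :=
  if h : (S.filter (x ≤ ·)).Nonempty then (S.filter (x ≤ ·)).min' h else S.max' hS

theorem roundUp_mem (x : ℝ) : roundUp S hS x ∈ S := by
  unfold roundUp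
  split_ifs with h
  · exact Finset.mem_of_mem_filter _ ((S.filter (x ≤ ·)).min'_mem h)
  · exact S.max'_mem hS

variable {S} {x y : ℝ}

theorem le_roundUp_and_roundUp_le (hy : y ∈ S) (hxy : x ≤ y) :
    x ≤ roundUp S hS x ∧ roundUp S hS x ≤ y := by
  have hyx : y ∈ S.filter (x ≤ ·) := Finset.mem_filter.2 ⟨hy, hxy⟩
  have h : (S.filter (x ≤ ·)).Nonempty := ⟨y, hyx⟩
  rw [roundUp, dif_pos h]
  exact ⟨(Finset.mem_filter.1 ((S.filter (x ≤ ·)).min'_mem h)).2, Finset.min'_le _ _ hyx⟩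

theorem roundUp_of_mem (hx : x ∈ S) : roundUp S hS x = x :=
  le_antisymm (le_roundUp_and_roundUp_le hS hx le_rfl).2 (le_roundUp_and_roundUp_le hS hx le_rfl).1

theorem roundUp_monotone : Monotone (roundUp S hS) := by
  intro x y hxy
  by_cases h : (S.filter (y ≤ ·)).Nonempty
  · obtain ⟨s, hs⟩ := h
    rw [Finset.mem_filter] at hs
    have hy := (le_roundUp_and_roundUp_le hS hs.1 hs.2).1
    exact (le_roundUp_and_roundUp_le hS (roundUp_mem S hS y) (hxy.trans hy)).2
  · rw [show roundUp S hS y = S.max' hS from dif_neg h]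
    exact S.le_max' _ (roundUp_mem S hS x)

end RoundUp

section Distance

variable {V : Type*} {H : SimpleGraph V} {p : Sym2 V → ℝ} {r u v : V}

theorem sum_map_edges_nonneg (hp : ∀ e, 0 ≤ p e) (w : H.Walk u v) :
    0 ≤ (w.edges.map p).sum :=
  List.sum_nonneg fun _ hx ↦ by
    obtain ⟨e, -, rfl⟩ := List.mem_map.1 hx
    exact hp e

theorem pdist_nonneg (hp : ∀ e, 0 ≤ p e) : 0 ≤ pdist H p r v :=
  Real.sInf_nonneg fun _ ⟨w, _, hc⟩ ↦ hc ▸ sum_map_edges_nonneg hp w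

theorem finite_pathCosts [Finite V] :
    {c : ℝ | ∃ q : H.Walk r v, q.IsPath ∧ c = (q.edges.map p).sum}.Finite := by
  classical
  have := Fintype.ofFinite V
  refine (Set.finite_range fun q : H.Path r v ↦ ((q : H.Walk r v).edges.map p).sum).subset ?_
  rintro _ ⟨w, hw, rfl⟩
  exact ⟨⟨w, hw⟩, rfl⟩

variable [Finite V]

theorem pdist_le_of_isPath {w : H.Walk r v} (hw : w.IsPath) :
    pdist H p r v ≤ (w.edges.map p).sum :=
  csInf_le finite_pathCosts.bddBelow ⟨w, hw, rfl⟩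

theorem exists_isPath_sum_eq_pdist (h : H.Reachable r v) :
    ∃ w : H.Walk r v, w.IsPath ∧ (w.edges.map p).sum = pdist H p r v := by
  classical
  obtain ⟨w⟩ := h
  have hne : {c : ℝ | ∃ q : H.Walk r v, q.IsPath ∧ c = (q.edges.map p).sum}.Nonempty :=
    ⟨_, w.bypass, w.bypass_isPath, rfl⟩
  obtain ⟨w, hw, hc⟩ := hne.csInf_mem finite_pathCosts
  exact ⟨w, hw, hc.symm⟩

theorem le_pdist {c : ℝ} (h : H.Reachable r v)
    (hc : ∀ w : H.Walk r v, w.IsPath → c ≤ (w.edges.map p).sum) : c ≤ pdist H p r v := by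
  obtain ⟨w, hw, hw'⟩ := exists_isPath_sum_eq_pdist (p := p) h
  exact hw' ▸ hc w hw

theorem pdist_self (hp : ∀ e, 0 ≤ p e) : pdist H p r r = 0 :=
  le_antisymm (by simpa using pdist_le_of_isPath (p := p) (Walk.IsPath.nil (G := H) (u := r)))
    (pdist_nonneg hp)

theorem pdist_le_sum_map_edges (hp : ∀ e, 0 ≤ p e) (w : H.Walk r v) :
    pdist H p r v ≤ (w.edges.map p).sum := by
  classical
  refine (pdist_le_of_isPath w.bypass_isPath).trans ?_
  obtain ⟨l, hl, hsub⟩ :=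
    List.Nodup.subperm w.bypass_isPath.isTrail.edges_nodup w.edges_bypass_subset_edges
  rw [← (hl.map p).sum_eq]
  exact (hsub.map p).sum_le_sum fun _ hx ↦ by
    obtain ⟨e, -, rfl⟩ := List.mem_map.1 hx
    exact hp e

theorem pdist_le_add (hp : ∀ e, 0 ≤ p e) (hu : H.Reachable r u) (w : H.Walk u v) :
    pdist H p r v ≤ pdist H p r u + (w.edges.map p).sum := by
  obtain ⟨w₀, -, hw₀⟩ := exists_isPath_sum_eq_pdist (p := p) hu
  calc pdist H p r v ≤ ((w₀.append w).edges.map p).sum := pdist_le_sum_map_edges hp _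
    _ = pdist H p r u + (w.edges.map p).sum := by
      rw [Walk.edges_append, List.map_append, List.sum_append, hw₀]

end Distance

section PotentialPrice

variable {V : Type*} {H : SimpleGraph V}

noncomputable def potentialPrice (d : V → ℝ) : Sym2 V → ℝ :=
  Sym2.lift ⟨fun a c ↦ |d a - d c|, fun _ _ ↦ abs_sub_comm _ _⟩

theorem potentialPrice_mk (d : V → ℝ) (a c : V) : potentialPrice d s(a, c) = |d a - d c| := rfl

theorem potentialPrice_nonneg (d : V → ℝ) (e : Sym2 V) : 0 ≤ potentialPrice d e := by
  induction e using Sym2.ind with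
  | _ a c => exact abs_nonneg _

theorem abs_sub_le_sum_potentialPrice (d : V → ℝ) {u v : V} (w : H.Walk u v) :
    |d v - d u| ≤ (w.edges.map (potentialPrice d)).sum := by
  induction w with
  | nil => simp
  | @cons a c v' _ w ih =>
    rw [Walk.edges_cons, List.map_cons, List.sum_cons, potentialPrice_mk, abs_sub_comm (d a)]
    exact (abs_sub_le _ _ _).trans (by linarith)

variable [Finite V] {q : Sym2 V → ℝ} {r : V} {g : ℝ → ℝ}

/-- Every edge of such a walk is tight, so the sum telescopes. -/
theorem sum_potentialPrice_of_tight (hq : ∀ e, 0 ≤ q e) (hg : Monotone g) {u v : V}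
    (hu : H.Reachable r u) (w : H.Walk u v)
    (hw : pdist H q r u + (w.edges.map q).sum = pdist H q r v) :
    (w.edges.map (potentialPrice (g ∘ pdist H q r))).sum
      = g (pdist H q r v) - g (pdist H q r u) := by
  induction w with
  | nil => simp
  | @cons a c v' hadj w ih =>
    rw [Walk.edges_cons, List.map_cons, List.sum_cons] at hw ⊢
    have hc : H.Reachable r c := hu.trans hadj.reachable
    have hac : pdist H q r c ≤ pdist H q r a + q s(a, c) := by
      simpa using pdist_le_add hq hu (Walk.cons hadj Walk.nil)
    have hcv := pdist_le_add hq hc w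
    have hle : g (pdist H q r a) ≤ g (pdist H q r c) := hg (by linarith [hq s(a, c)])
    rw [ih hc (by linarith), potentialPrice_mk, Function.comp_apply, Function.comp_apply,
      abs_of_nonpos (sub_nonpos.2 hle)]
    ring

theorem pdist_potentialPrice_comp (hH : H.Connected) (hq : ∀ e, 0 ≤ q e) (hg : Monotone g)
    (hg0 : g 0 = 0) (v : V) :
    pdist H (potentialPrice (g ∘ pdist H q r)) r v = g (pdist H q r v) := by
  have hr : g (pdist H q r r) = 0 := by rw [pdist_self hq, hg0]
  apply le_antisymm
  · obtain ⟨w, hw, hwq⟩ := exists_isPath_sum_eq_pdist (p := q) (hH.preconnected r v)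
    have := sum_potentialPrice_of_tight hq hg (Reachable.refl r) w
      (by rw [pdist_self hq, hwq, zero_add])
    rw [hr, sub_zero] at this
    exact this ▸ pdist_le_of_isPath hw
  · refine le_pdist (hH.preconnected r v) fun w _ ↦ ?_
    have := abs_sub_le_sum_potentialPrice (g ∘ pdist H q r) w
    rw [Function.comp_apply, Function.comp_apply, hr, sub_zero] at this
    exact (le_abs_self _).trans this

end PotentialPrice

theorem revenue_le_revenue_roundUp {V : Type*} [Finite V] {H : SimpleGraph V}
    (hH : H.Connected) (r : V) {ι : Type*} [Fintype ι] (t : ι → V) (b : ι → ℝ)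
    {S : Finset ℝ} (hS : S.Nonempty) (h0 : 0 ∈ S) (hbS : ∀ i, b i ∈ S)
    {q : Sym2 V → ℝ} (hq : ∀ e, 0 ≤ q e) :
    revenue H r t b q ≤ revenue H r t b (potentialPrice (roundUp S hS ∘ pdist H q r)) := by
  have hg0 := roundUp_of_mem hS h0
  refine Finset.sum_le_sum fun i _ ↦ ?_
  rw [pdist_potentialPrice_comp hH hq (roundUp_monotone hS) hg0]
  set x := pdist H q r (t i)
  by_cases hx : x ≤ b i
  · obtain ⟨hxg, hgb⟩ := le_roundUp_and_roundUp_le hS (hbS i) hx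
    rw [if_pos hx, if_pos hgb]
    exact hxg
  · have : 0 ≤ roundUp S hS x := hg0 ▸ roundUp_monotone hS (pdist_nonneg hq)
    rw [if_neg hx]
    split_ifs <;> simp [this]

end Tollbooth

open Tollbooth in
theorem stmt6_general {V : Type*} [Fintype V] (H : SimpleGraph V) (hH : H.Connected) (r : V)
    {ι : Type*} [Fintype ι] (t : ι → V) (b : ι → ℝ) :
    ∃ p : Sym2 V → ℝ, (∀ e, 0 ≤ p e) ∧
      (∀ q : Sym2 V → ℝ, (∀ e, 0 ≤ q e) → revenue H r t b q ≤ revenue H r t b p) ∧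
      (∀ v : V, pdist H p r v ∈ ({0} ∪ Set.range b : Set ℝ)) := by
  classical
  set S : Finset ℝ := insert 0 (Finset.univ.image b)
  have hS : S.Nonempty := Finset.insert_nonempty _ _
  have h0 : 0 ∈ S := Finset.mem_insert_self _ _
  have hbS : ∀ i, b i ∈ S := fun i ↦
    Finset.mem_insert_of_mem (Finset.mem_image_of_mem b (Finset.mem_univ i))
  let round (q : Sym2 V → ℝ) := potentialPrice (roundUp S hS ∘ pdist H q r)
  obtain ⟨d, -, hd⟩ := (Fintype.piFinset fun _ : V ↦ S).exists_max_image
    (fun d ↦ revenue H r t b (potentialPrice d))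
    ⟨fun _ ↦ 0, Fintype.mem_piFinset.2 fun _ ↦ h0⟩
  refine ⟨round (potentialPrice d), potentialPrice_nonneg _, fun q hq ↦ ?_, fun v ↦ ?_⟩
  · calc revenue H r t b q ≤ revenue H r t b (round q) :=
          revenue_le_revenue_roundUp hH r t b hS h0 hbS hq
      _ ≤ revenue H r t b (potentialPrice d) :=
          hd _ (Fintype.mem_piFinset.2 fun _ ↦ roundUp_mem S hS _)
      _ ≤ revenue H r t b (round (potentialPrice d)) :=
          revenue_le_revenue_roundUp hH r t b hS h0 hbS (potentialPrice_nonneg d)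
  · rw [pdist_potentialPrice_comp hH (potentialPrice_nonneg d) (roundUp_monotone hS)
      (roundUp_of_mem hS h0)]
    simpa [S, or_comm, eq_comm] using roundUp_mem S hS (pdist H (potentialPrice d) r v)

/-- For a rooted tollbooth instance, some revenue-maximizing nonnegative price
assignment puts every root-distance in `{0} ∪ {budgets}`. -/
theorem stmt6 {V : Type*} [Fintype V] (H : SimpleGraph V) (hH : H.Connected) (r : V)
    {ι : Type*} [Fintype ι] (t : ι → V) (b : ι → ℝ) (hb : ∀ i, 0 < b i) :
    ∃ p : Sym2 V → ℝ, (∀ e, 0 ≤ p e) ∧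
      (∀ q : Sym2 V → ℝ, (∀ e, 0 ≤ q e) → revenue H r t b q ≤ revenue H r t b p) ∧
      (∀ v : V, pdist H p r v ∈ ({0} ∪ Set.range b : Set ℝ)) :=
  stmt6_general H hH r t b
end

section
/- Given a tree T with |E| edges and a parameter k ≥ 1, there exists a partition of the edges of T into connected subtrees such that every part has at most 4·⌈|E|/k⌉ edges and at most one part has fewer than ⌈|E|/k⌉ edges; consequently the number of parts is between ⌈k/4⌉-type lower bounds and k. -/
/-!
Call an edge set rooted at `r` if every vertex it touches can be reached from `r` along its own
edges. Split a rooted edge set `A` at an edge `rx` into the edges of `A - rx` reachable from `x`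
and the remaining ones; these two halves are again rooted, at `x` and at `r`. Recursively, each
half splits into connected parts of `s` to `2s` edges and a rooted remainder of fewer than `s`
edges. The edge `rx` together with both remainders is rooted at `r` and has fewer than `2s`
edges: it is a new part if it has at least `s` edges, and the new remainder otherwise.
With `s = ⌈|E|/k⌉`, all parts but one have at least `s` edges, so there are at most `k` parts.
-/

open SimpleGraph Finset

namespace Finset

variable {α : Type*} [DecidableEq α]

def IsPartition (A : Finset α) (P : Finset (Finset α)) : Prop :=
  (P : Set (Finset α)).PairwiseDisjoint id ∧ P.sup id = A

variable {A B R : Finset α} {P Q : Finset (Finset α)}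

lemma IsPartition.subset (h : IsPartition A P) {p : Finset α} (hp : p ∈ P) : p ⊆ A :=
  h.2 ▸ le_sup (f := id) hp

lemma IsPartition.union (hP : IsPartition A P) (hQ : IsPartition B Q) (hAB : Disjoint A B) :
    IsPartition (A ∪ B) (P ∪ Q) := by
  refine ⟨?_, by rw [sup_union, hP.2, hQ.2]; rfl⟩
  rw [coe_union]
  exact hP.1.union hQ.1 fun p hp q hq _ => hAB.mono (hP.subset hp) (hQ.subset hq)

lemma IsPartition.insert (hP : IsPartition A P) (hR : Disjoint R A) :
    IsPartition (R ∪ A) (insert R P) := by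
  refine ⟨?_, by rw [sup_insert, hP.2]; rfl⟩
  rw [coe_insert]
  exact hP.1.insert fun p hp _ => hR.mono_right (hP.subset hp)

end Finset

theorem Finpartition.card_parts_le_of_card_le_mul {α : Type*} [DecidableEq α] {A : Finset α}
    (Q : Finpartition A) {s k : ℕ} (hsmall : #{p ∈ Q.parts | #p < s} ≤ 1)
    (hA : #A ≤ k * s) :
    #Q.parts ≤ k := by
  set small := {p ∈ Q.parts | #p < s}
  set big := {p ∈ Q.parts | ¬ #p < s}
  have hsum : ∑ p ∈ small, #p + ∑ p ∈ big, #p = #A := by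
    rw [sum_filter_add_sum_filter_not, Q.sum_card_parts]
  have hbig : #big • s ≤ ∑ p ∈ big, #p :=
    card_nsmul_le_sum big _ s fun p hp => not_lt.mp (mem_filter.mp hp).2
  have hsmall_le : #small • 1 ≤ ∑ p ∈ small, #p :=
    card_nsmul_le_sum small _ 1 fun p hp => (Q.nonempty_of_mem_parts (mem_filter.mp hp).1).card_pos
  rw [smul_eq_mul] at hbig hsmall_le
  have hcard : #small + #big = #Q.parts := card_filter_add_card_filter_not _
  have hQA := Q.card_parts_le_card
  interval_cases #small <;> nlinarith

namespace EdgePartition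

variable {V : Type*}

def IsRootedAt (S : Set (Sym2 V)) (r : V) : Prop :=
  ∀ f ∈ S, ∀ b ∈ f, (fromEdgeSet S).Reachable r b

lemma reachable_of_mem_of_mem {S : Set (Sym2 V)} {f : Sym2 V} (hf : f ∈ S) {a b : V}
    (ha : a ∈ f) (hb : b ∈ f) : (fromEdgeSet S).Reachable a b := by
  obtain rfl | hab := eq_or_ne a b
  · rfl
  · rw [(Sym2.mem_and_mem_iff hab).mp ⟨ha, hb⟩] at hf
    exact ((fromEdgeSet_adj S).mpr ⟨hf, hab⟩).reachable

lemma reachable_of_component_edges_mem {S D : Set (Sym2 V)} {u v : V}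
    (hD : ∀ w y, (fromEdgeSet S).Reachable u w → s(w, y) ∈ S → s(w, y) ∈ D)
    (h : (fromEdgeSet S).Reachable u v) : (fromEdgeSet D).Reachable u v := by
  rw [reachable_iff_reflTransGen] at h ⊢
  induction h with
  | refl => rfl
  | tail huw hwy ih =>
    rw [fromEdgeSet_adj] at hwy
    exact ih.tail ((fromEdgeSet_adj D).mpr
      ⟨hD _ _ ((reachable_iff_reflTransGen _ _).mpr huw) hwy.1, hwy.2⟩)

lemma reachable_or_reachable_diff_singleton {S : Set (Sym2 V)} {r x v : V}
    (h : (fromEdgeSet S).Reachable r v) :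
    (fromEdgeSet (S \ {s(r, x)})).Reachable r v ∨
      (fromEdgeSet (S \ {s(r, x)})).Reachable x v := by
  rw [reachable_iff_reflTransGen] at h
  induction h with
  | refl => exact .inl .rfl
  | @tail w y _ hwy ih =>
    rw [fromEdgeSet_adj] at hwy
    by_cases he : s(w, y) = s(r, x)
    · rcases Sym2.eq_iff.mp he with ⟨-, rfl⟩ | ⟨-, rfl⟩
      · exact .inr .rfl
      · exact .inl .rfl
    · have hadj : (fromEdgeSet (S \ {s(r, x)})).Adj w y :=
        (fromEdgeSet_adj _).mpr ⟨⟨hwy.1, he⟩, hwy.2⟩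
      exact ih.imp (·.trans hadj.reachable) (·.trans hadj.reachable)

lemma exists_walk_of_reachable {G : SimpleGraph V} {S : Set (Sym2 V)} (hS : S ⊆ G.edgeSet)
    {a b : V} (h : (fromEdgeSet S).Reachable a b) :
    ∃ w : G.Walk a b, ∀ e ∈ w.edges, e ∈ S := by
  obtain ⟨w⟩ := h
  refine ⟨w.mapLe ((fromEdgeSet_mono hS).trans (fromEdgeSet_edgeSet G).le), fun e he => ?_⟩
  rw [Walk.edges_mapLe_eq_edges] at he
  have he' := w.edges_subset_edgeSet he
  rw [edgeSet_fromEdgeSet] at he'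
  exact he'.1

lemma isRootedAt_edgeSet {G : SimpleGraph V} (hG : G.Connected) (r : V) :
    IsRootedAt G.edgeSet r := fun _ _ b _ => by
  rw [fromEdgeSet_edgeSet]
  exact hG.preconnected r b

namespace IsRootedAt

variable {S S' : Set (Sym2 V)} {r x : V}

lemma union (h : IsRootedAt S r) (h' : IsRootedAt S' r) : IsRootedAt (S ∪ S') r := by
  rintro f (hf | hf) b hb
  · exact (h f hf b hb).mono (fromEdgeSet_mono Set.subset_union_left)
  · exact (h' f hf b hb).mono (fromEdgeSet_mono Set.subset_union_right)

lemma insert_edge (h : IsRootedAt S x) : IsRootedAt (insert s(r, x) S) r := by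
  have hrx : (fromEdgeSet (insert s(r, x) S)).Reachable r x :=
    reachable_of_mem_of_mem (Set.mem_insert _ _) (Sym2.mem_mk_left _ _) (Sym2.mem_mk_right _ _)
  rintro f (rfl | hf) b hb
  · exact reachable_of_mem_of_mem (Set.mem_insert _ _) (Sym2.mem_mk_left _ _) hb
  · exact hrx.trans ((h f hf b hb).mono (fromEdgeSet_mono (Set.subset_insert _ _)))

lemma exists_mem_edge (h : IsRootedAt S r) {f : Sym2 V} (hf : f ∈ S) : ∃ x, s(r, x) ∈ S := by
  induction f using Sym2.ind with
  | _ a b =>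
    obtain rfl | ⟨c, hrc, -⟩ :=
      ((reachable_iff_reflTransGen _ _).mp (h _ hf a (Sym2.mem_mk_left a b))).cases_head
    · exact ⟨b, hf⟩
    · exact ⟨c, ((fromEdgeSet_adj S).mp hrc).1⟩

lemma reachable (h : IsRootedAt S r) {f g : Sym2 V} (hf : f ∈ S) (hg : g ∈ S) {a b : V}
    (ha : a ∈ f) (hb : b ∈ g) : (fromEdgeSet S).Reachable a b :=
  (h f hf a ha).symm.trans (h g hg b hb)

end IsRootedAt

open Classical in
noncomputable def componentEdges (A : Finset (Sym2 V)) (x : V) : Finset (Sym2 V) :=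
  {f ∈ A | ∃ v ∈ f, (fromEdgeSet (A : Set (Sym2 V))).Reachable x v}

lemma mem_componentEdges {A : Finset (Sym2 V)} {x : V} {f : Sym2 V} :
    f ∈ componentEdges A x ↔
      f ∈ A ∧ ∃ v ∈ f, (fromEdgeSet (A : Set (Sym2 V))).Reachable x v := by
  simp [componentEdges]

lemma isRootedAt_componentEdges (A : Finset (Sym2 V)) (x : V) :
    IsRootedAt (componentEdges A x : Set (Sym2 V)) x := by
  intro f hf b hb
  obtain ⟨hfA, v, hv, hxv⟩ := mem_componentEdges.mp hf
  refine reachable_of_component_edges_mem (fun w y hxw hwy => ?_)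
    (hxv.trans (reachable_of_mem_of_mem hfA hv hb))
  exact mem_componentEdges.mpr ⟨hwy, w, Sym2.mem_mk_left w y, hxw⟩

variable [DecidableEq V]

lemma IsRootedAt.sdiff_componentEdges {A : Finset (Sym2 V)} {r x : V}
    (hA : IsRootedAt (A : Set (Sym2 V)) r) :
    IsRootedAt (↑(A.erase s(r, x) \ componentEdges (A.erase s(r, x)) x) : Set (Sym2 V)) r := by
  set A' := A.erase s(r, x)
  intro f hf b hb
  obtain ⟨hfA', hfB⟩ := mem_sdiff.mp hf
  have hxb : ¬ (fromEdgeSet (A' : Set (Sym2 V))).Reachable x b :=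
    fun hxb => hfB (mem_componentEdges.mpr ⟨hfA', b, hb, hxb⟩)
  have hrb : (fromEdgeSet (A' : Set (Sym2 V))).Reachable r b := by
    have := reachable_or_reachable_diff_singleton (x := x) (hA f (mem_of_mem_erase hfA') b hb)
    rw [← coe_erase] at this
    exact this.resolve_right hxb
  -- an edge at a vertex reachable from `r` cannot meet the component of `x`: `b` would lie in it
  refine reachable_of_component_edges_mem (fun w y hrw hwy => ?_) hrb
  refine mem_sdiff.mpr ⟨hwy, fun hB => hxb ?_⟩
  obtain ⟨-, v, hv, hxv⟩ := mem_componentEdges.mp hB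
  exact hxv.trans ((reachable_of_mem_of_mem hwy hv (Sym2.mem_mk_left w y)).trans
    (hrw.symm.trans hrb))

lemma IsRootedAt.exists_split {A : Finset (Sym2 V)} {r : V} (hA : IsRootedAt (A : Set (Sym2 V)) r)
    (x : V) : ∃ B C : Finset (Sym2 V), Disjoint B C ∧ B ∪ C = A.erase s(r, x) ∧
      IsRootedAt (B : Set (Sym2 V)) x ∧ IsRootedAt (C : Set (Sym2 V)) r :=
  ⟨_, _, disjoint_sdiff, union_sdiff_of_subset fun _ hf => (mem_componentEdges.mp hf).1,
    isRootedAt_componentEdges _ x, hA.sdiff_componentEdges⟩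

def IsBalancedPart (s : ℕ) (p : Finset (Sym2 V)) : Prop :=
  (∃ u, IsRootedAt (p : Set (Sym2 V)) u) ∧ s ≤ #p ∧ #p ≤ 2 * s

structure IsRootedBalancedPartition (s : ℕ) (A : Finset (Sym2 V)) (r : V)
    (P : Finset (Finset (Sym2 V))) (R : Finset (Sym2 V)) : Prop where
  rest_subset : R ⊆ A
  isPartition : IsPartition (A \ R) P
  isBalancedPart : ∀ p ∈ P, IsBalancedPart s p
  rest_isRootedAt : IsRootedAt (R : Set (Sym2 V)) r
  card_rest_lt : #R < s

lemma IsRootedBalancedPartition.merge {s : ℕ} {A B C : Finset (Sym2 V)} {r x : V}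
    {PB PC : Finset (Finset (Sym2 V))} {RB RC : Finset (Sym2 V)}
    (he : s(r, x) ∈ A) (hBC : Disjoint B C) (hA : B ∪ C = A.erase s(r, x))
    (hB : IsRootedBalancedPartition s B x PB RB) (hC : IsRootedBalancedPartition s C r PC RC) :
    ∃ P R, IsRootedBalancedPartition s A r P R := by
  set R := insert s(r, x) (RB ∪ RC)
  have hRA : R ⊆ A := insert_subset he <|
    (union_subset_union hB.rest_subset hC.rest_subset).trans (hA ▸ erase_subset _ _)
  have hdiff : A \ R = (B \ RB) ∪ (C \ RC) := by
    ext f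
    have hmem := congrArg (f ∈ ·) hA
    have hRB := @hB.rest_subset f
    have hRC := @hC.rest_subset f
    have hBC' : f ∈ B → f ∉ C := fun h => disjoint_left.mp hBC h
    simp only [R, mem_sdiff, mem_insert, mem_union, mem_erase, eq_iff_iff] at hmem ⊢
    grind
  have hpart : IsPartition (A \ R) (PB ∪ PC) :=
    hdiff ▸ hB.isPartition.union hC.isPartition (hBC.mono sdiff_subset sdiff_subset)
  have hbal : ∀ p ∈ PB ∪ PC, IsBalancedPart s p := fun p hp =>
    (mem_union.mp hp).elim (hB.isBalancedPart p) (hC.isBalancedPart p)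
  have hroot : IsRootedAt (R : Set (Sym2 V)) r := by
    rw [coe_insert, coe_union, ← Set.insert_union]
    exact hB.rest_isRootedAt.insert_edge.union hC.rest_isRootedAt
  have hcard : #R ≤ 2 * s := by
    have := hB.card_rest_lt; have := hC.card_rest_lt
    have := card_union_le RB RC; have : #R ≤ #(RB ∪ RC) + 1 := card_insert_le _ _
    omega
  by_cases hsmall : #R < s
  · exact ⟨PB ∪ PC, R, hRA, hpart, hbal, hroot, hsmall⟩
  · refine ⟨insert R (PB ∪ PC), ∅, empty_subset _, ?_, ?_, by simp [IsRootedAt],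
      by rw [card_empty]; exact Nat.zero_lt_of_lt hB.card_rest_lt⟩
    · rw [sdiff_empty, ← union_sdiff_of_subset hRA]
      exact hpart.insert disjoint_sdiff
    · exact forall_mem_insert _ _ _ |>.mpr ⟨⟨⟨r, hroot⟩, by omega, hcard⟩, hbal⟩

theorem exists_isRootedBalancedPartition {s : ℕ} (hs : 1 ≤ s) (A : Finset (Sym2 V)) {r : V}
    (hA : IsRootedAt (A : Set (Sym2 V)) r) : ∃ P R, IsRootedBalancedPartition s A r P R := by
  induction A using Finset.strongInduction generalizing r with
  | H A ih =>
    obtain rfl | ⟨f, hf⟩ := A.eq_empty_or_nonempty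
    · exact ⟨∅, ∅, subset_rfl, ⟨by simp, rfl⟩, by simp, by simp [IsRootedAt], by simpa⟩
    obtain ⟨x, he⟩ := hA.exists_mem_edge hf
    obtain ⟨B, C, hBC, hunion, hB, hC⟩ := hA.exists_split x
    have hlt : A.erase s(r, x) ⊂ A := erase_ssubset he
    obtain ⟨PB, RB, hPB⟩ := ih B ((hunion ▸ subset_union_left).trans_ssubset hlt) hB
    obtain ⟨PC, RC, hPC⟩ := ih C ((hunion ▸ subset_union_right).trans_ssubset hlt) hC
    exact hPB.merge he hBC hunion hPC

theorem exists_balanced_finpartition {s : ℕ} (hs : 1 ≤ s) {A : Finset (Sym2 V)} {r : V}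
    (hA : IsRootedAt (A : Set (Sym2 V)) r) :
    ∃ Q : Finpartition A,
      (∀ p ∈ Q.parts, (∃ u, IsRootedAt (p : Set (Sym2 V)) u) ∧ #p ≤ 2 * s) ∧
      #{p ∈ Q.parts | #p < s} ≤ 1 := by
  obtain ⟨P, R, h⟩ := exists_isRootedBalancedPartition hs A hA
  have hpart : IsPartition A (insert R P) :=
    union_sdiff_of_subset h.rest_subset ▸ h.isPartition.insert disjoint_sdiff
  let Q : Finpartition A := .ofErase _ (supIndep_iff_pairwiseDisjoint.mpr hpart.1) hpart.2
  have hQ : ∀ p ∈ Q.parts, p = R ∨ p ∈ P := fun p hp => mem_insert.mp (mem_of_mem_erase hp)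
  have eq_rest_of_card_lt : ∀ p ∈ {p ∈ Q.parts | #p < s}, p = R := fun p hp =>
    (hQ p (mem_filter.mp hp).1).resolve_right
      fun hP => (h.isBalancedPart p hP).2.1.not_gt (mem_filter.mp hp).2
  refine ⟨Q, fun p hp => ?_,
    card_le_one.mpr fun p hp q hq => (eq_rest_of_card_lt p hp).trans (eq_rest_of_card_lt q hq).symm⟩
  obtain rfl | hp := hQ p hp
  · exact ⟨⟨r, h.rest_isRootedAt⟩, by have := h.card_rest_lt; omega⟩
  · exact ⟨(h.isBalancedPart p hp).1, (h.isBalancedPart p hp).2.2⟩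

end EdgePartition

open EdgePartition in
/-- Balanced connected edge partition of a tree: the edges of a tree with `|E| ≥ 1`
edges can be partitioned into nonempty connected parts, each of size at most
`4⌈|E|/k⌉`, with at most one part of size less than `⌈|E|/k⌉`, and hence at most `k`
parts in total.  (Here `⌈|E|/k⌉` is `(|E| + k - 1) / k` in natural division.) -/
theorem stmt11 {V : Type*} [Fintype V] [DecidableEq V]
    (T : SimpleGraph V) [DecidableRel T.Adj] (hT : T.IsTree)
    (k : ℕ) (hk : 1 ≤ k) (hE : 1 ≤ T.edgeFinset.card) :
    ∃ parts : Finset (Finset (Sym2 V)),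
      (∀ p ∈ parts, p.Nonempty) ∧
      (∀ p ∈ parts, ∀ q ∈ parts, p ≠ q → Disjoint p q) ∧
      (parts.biUnion id = T.edgeFinset) ∧
      (∀ p ∈ parts, ∀ a b : V, (∃ e ∈ p, a ∈ e) → (∃ e ∈ p, b ∈ e) →
        ∃ w : T.Walk a b, ∀ e ∈ w.edges, e ∈ p) ∧
      (∀ p ∈ parts, p.card ≤ 4 * ((T.edgeFinset.card + k - 1) / k)) ∧
      ((parts.filter (fun p => p.card < (T.edgeFinset.card + k - 1) / k)).card ≤ 1) ∧
      parts.card ≤ k := by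
  set m := #T.edgeFinset
  have hs : 1 ≤ (m + k - 1) / k := (Nat.one_le_div_iff (by omega)).mpr (by omega)
  have hm : m ≤ k * ((m + k - 1) / k) := by
    have := Nat.lt_div_mul_add (a := m + k - 1) (by omega : 0 < k)
    rw [mul_comm]
    omega
  obtain ⟨r⟩ := hT.connected.nonempty
  obtain ⟨Q, hQ, hsmall⟩ := exists_balanced_finpartition hs (A := T.edgeFinset) (r := r)
    (by rw [coe_edgeFinset]; exact isRootedAt_edgeSet hT.connected r)
  refine ⟨Q.parts, fun p => Q.nonempty_of_mem_parts, fun p hp q hq => Q.disjoint hp hq,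
    Q.biUnion_parts, ?_, fun p hp => by linarith [(hQ p hp).2], hsmall,
    Q.card_parts_le_of_card_le_mul hsmall hm⟩
  rintro p hp a b ⟨f, hf, ha⟩ ⟨g, hg, hb⟩
  obtain ⟨u, hu⟩ := (hQ p hp).1
  refine exists_walk_of_reachable ?_ (hu.reachable hf hg ha hb)
  rw [← coe_edgeFinset T]
  exact coe_subset.mpr (Q.le hp)
end

section
/- Rounding lemma: given nonnegative prices with every segment length at most m·b_max, one can decrease prices so that every segment length lies in the geometric set P = {m·b_max/2^t : 0 ≤ t ≤ ⌈log₂(1024·m²·n)⌉} ∪ {0}, and the length of every fixed path under the new prices is at least half its original length minus b_max/(1024·n). -/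
/-!
Round every segment length `c` down to the largest element `r` of
`P = {M / 2 ^ t : t ≤ T} ∪ {0}` below it and scale the prices on that segment by `r / c`.
For `c ≤ M` the largest element of `P` below `c` is either `0`, which only happens when
`c < M / 2 ^ T`, or at least `c / 2`. Hence every edge keeps at least half its price, up to
an additive loss of `M / 2 ^ T`; summed over at most `m` edges of a path this loss is at most
`m² b_max / 2 ^ T ≤ b_max / (1024 n)`.
-/

open Finset

open Classical in
noncomputable def roundDownPow (M : ℝ) (T : ℕ) (c : ℝ) : ℝ :=
  if h : ∃ t, t ≤ T ∧ M / 2 ^ t ≤ c then M / 2 ^ Nat.find h else 0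

section RoundDownPow

variable {M c : ℝ} {T : ℕ}

theorem roundDownPow_mem (M : ℝ) (T : ℕ) (c : ℝ) :
    roundDownPow M T c ∈ {x : ℝ | ∃ t : ℕ, t ≤ T ∧ x = M / 2 ^ t} ∪ {0} := by
  unfold roundDownPow
  split_ifs with h
  · exact Or.inl ⟨_, (Nat.find_spec h).1, rfl⟩
  · exact Or.inr rfl

theorem roundDownPow_nonneg (hM : 0 ≤ M) : 0 ≤ roundDownPow M T c := by
  unfold roundDownPow
  split_ifs <;> positivity

theorem roundDownPow_le (hc : 0 ≤ c) : roundDownPow M T c ≤ c := by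
  unfold roundDownPow
  split_ifs with h
  · exact (Nat.find_spec h).2
  · exact hc

theorem roundDownPow_eq_zero (hM : 0 ≤ M) (hc : c < M / 2 ^ T) : roundDownPow M T c = 0 := by
  rw [roundDownPow, dif_neg]
  rintro ⟨t, ht, htc⟩
  have : M / 2 ^ T ≤ M / 2 ^ t :=
    div_le_div_of_nonneg_left hM (by positivity) (pow_le_pow_right₀ one_le_two ht)
  linarith

theorem le_two_mul_roundDownPow (hc : 0 ≤ c) (hcM : c ≤ M) (hTc : M / 2 ^ T ≤ c) :
    c ≤ 2 * roundDownPow M T c := by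
  have h : ∃ t, t ≤ T ∧ M / 2 ^ t ≤ c := ⟨T, le_rfl, hTc⟩
  rw [roundDownPow, dif_pos h]
  rcases Nat.eq_zero_or_pos (Nat.find h) with h0 | hpos
  · rw [h0, pow_zero, div_one]
    linarith
  · obtain ⟨k, hk⟩ := Nat.exists_eq_add_one_of_ne_zero hpos.ne'
    have hkT : k ≤ T := by have := (Nat.find_spec h).1; omega
    have hck : c < M / 2 ^ k := by
      have hmin := Nat.find_min h (show k < Nat.find h by omega)
      exact lt_of_not_ge fun hle => hmin ⟨hkT, hle⟩
    rw [hk, pow_succ]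
    calc c ≤ M / 2 ^ k := hck.le
      _ = 2 * (M / (2 ^ k * 2)) := by field_simp

end RoundDownPow

section ScaleSegments

variable {ι : Type*} [DecidableEq ι] {segs : Finset (Finset ι)} {s : Finset ι} {e : ι}

-- The effect of scaling the prices on each `s ∈ segs` in turn by `x s`; edges outside every
-- segment keep their price.
def scaleSegments (segs : Finset (Finset ι)) (x : Finset ι → ℝ) (p : ι → ℝ) (e : ι) : ℝ :=
  p e * ∏ s ∈ segs with e ∈ s, x s

theorem scaleSegments_of_mem (hd : (segs : Set (Finset ι)).PairwiseDisjoint id)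
    (hs : s ∈ segs) (he : e ∈ s) (x : Finset ι → ℝ) (p : ι → ℝ) :
    scaleSegments segs x p e = p e * x s := by
  have : {t ∈ segs | e ∈ t} = {s} := by
    ext t
    simp only [mem_filter, mem_singleton]
    exact ⟨fun ⟨ht, het⟩ => hd.elim_finset ht hs e het he, by rintro rfl; exact ⟨hs, he⟩⟩
  rw [scaleSegments, this, prod_singleton]

theorem scaleSegments_of_notMem (he : ∀ s ∈ segs, e ∉ s) (x : Finset ι → ℝ) (p : ι → ℝ) :
    scaleSegments segs x p e = p e := by
  rw [scaleSegments, filter_false_of_mem he, prod_empty, mul_one]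

theorem sum_scaleSegments (hd : (segs : Set (Finset ι)).PairwiseDisjoint id) (hs : s ∈ segs)
    (x : Finset ι → ℝ) (p : ι → ℝ) :
    ∑ e ∈ s, scaleSegments segs x p e = x s * ∑ e ∈ s, p e := by
  rw [mul_sum]
  exact sum_congr rfl fun e he => by rw [scaleSegments_of_mem hd hs he, mul_comm]

end ScaleSegments

section RoundSegments

variable {ι : Type*} [DecidableEq ι] {segs : Finset (Finset ι)} {M : ℝ} {T : ℕ} {p : ι → ℝ}

noncomputable def roundSegments (M : ℝ) (T : ℕ) (segs : Finset (Finset ι)) (p : ι → ℝ) :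
    ι → ℝ :=
  scaleSegments segs (fun s => roundDownPow M T (∑ e ∈ s, p e) / ∑ e ∈ s, p e) p

theorem sum_roundSegments_mem (hd : (segs : Set (Finset ι)).PairwiseDisjoint id)
    {s : Finset ι} (hs : s ∈ segs) :
    ∑ e ∈ s, roundSegments M T segs p e ∈
      {x : ℝ | ∃ t : ℕ, t ≤ T ∧ x = M / 2 ^ t} ∪ {0} := by
  rw [roundSegments, sum_scaleSegments hd hs]
  by_cases hc : ∑ e ∈ s, p e = 0
  · rw [hc, mul_zero]
    exact Or.inr rfl
  · rw [div_mul_cancel₀ _ hc]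
    exact roundDownPow_mem _ _ _

theorem roundSegments_mem_Icc (hM : 0 ≤ M) (hd : (segs : Set (Finset ι)).PairwiseDisjoint id)
    (hp : ∀ e, 0 ≤ p e) (e : ι) :
    roundSegments M T segs p e ∈ Set.Icc 0 (p e) := by
  by_cases he : ∃ s ∈ segs, e ∈ s
  · obtain ⟨s, hs, hes⟩ := he
    have hc : 0 ≤ ∑ e ∈ s, p e := sum_nonneg fun e _ => hp e
    rw [roundSegments, scaleSegments_of_mem hd hs hes]
    exact ⟨mul_nonneg (hp e) (div_nonneg (roundDownPow_nonneg hM) hc),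
      mul_le_of_le_one_right (hp e) (div_le_one_of_le₀ (roundDownPow_le hc) hc)⟩
  · push Not at he
    rw [roundSegments, scaleSegments_of_notMem he]
    exact ⟨hp e, le_rfl⟩

theorem half_sub_le_roundSegments (hM : 0 ≤ M) (hd : (segs : Set (Finset ι)).PairwiseDisjoint id)
    (hp : ∀ e, 0 ≤ p e) (hlen : ∀ s ∈ segs, ∑ e ∈ s, p e ≤ M) (e : ι) :
    p e / 2 - M / 2 ^ T ≤ roundSegments M T segs p e := by
  have hθ : 0 ≤ M / 2 ^ T := by positivity
  by_cases he : ∃ s ∈ segs, e ∈ s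
  · obtain ⟨s, hs, hes⟩ := he
    set c := ∑ e ∈ s, p e
    have hc : 0 ≤ c := sum_nonneg fun e _ => hp e
    have hec : p e ≤ c := single_le_sum (fun e _ => hp e) hes
    rw [roundSegments, scaleSegments_of_mem hd hs hes]
    by_cases hTc : M / 2 ^ T ≤ c
    · have h2 := le_two_mul_roundDownPow hc (hlen s hs) hTc
      suffices p e / 2 ≤ p e * (roundDownPow M T c / c) by linarith
      rcases hc.eq_or_lt with hc0 | hcpos
      · have : p e = 0 := le_antisymm (hc0 ▸ hec) (hp e)
        simp [this]
      · rw [mul_div_assoc', le_div_iff₀ hcpos]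
        nlinarith [mul_le_mul_of_nonneg_left h2 (hp e)]
    · rw [roundDownPow_eq_zero hM (lt_of_not_ge hTc), zero_div, mul_zero]
      linarith [hp e]
  · push Not at he
    rw [roundSegments, scaleSegments_of_notMem he]
    linarith [hp e]

end RoundSegments

theorem natCast_mul_div_two_pow_clog_le (m n : ℕ) (hn : 1 ≤ n) {b : ℝ} (hb : 0 ≤ b) :
    (m : ℝ) * (m * b / 2 ^ Nat.clog 2 (1024 * m ^ 2 * n)) ≤ b / (1024 * n) := by
  have h2T : (1024 * m ^ 2 * n : ℝ) ≤ 2 ^ Nat.clog 2 (1024 * m ^ 2 * n) := by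
    exact_mod_cast Nat.le_pow_clog one_lt_two _
  have hn' : (0 : ℝ) < n := by exact_mod_cast hn
  rw [← mul_div_assoc, div_le_div_iff₀ (by positivity) (by positivity)]
  calc (m : ℝ) * (m * b) * (1024 * n) = (1024 * m ^ 2 * n) * b := by ring
    _ ≤ 2 ^ Nat.clog 2 (1024 * m ^ 2 * n) * b := by gcongr
    _ = b * 2 ^ Nat.clog 2 (1024 * m ^ 2 * n) := mul_comm _ _

theorem stmt13_general (m n : ℕ) (hn : 1 ≤ n) (bmax : ℝ) (hb : 0 < bmax)
    (p : Fin m → ℝ) (hp : ∀ e, 0 ≤ p e)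
    (segs : Finset (Finset (Fin m)))
    (hdisj : ∀ s ∈ segs, ∀ t ∈ segs, s ≠ t → Disjoint s t)
    (hlen : ∀ s ∈ segs, ∑ e ∈ s, p e ≤ m * bmax) :
    ∃ q : Fin m → ℝ, (∀ e, 0 ≤ q e ∧ q e ≤ p e) ∧
      (∀ s ∈ segs, (∑ e ∈ s, q e) ∈
        ({x : ℝ | ∃ t : ℕ, t ≤ Nat.clog 2 (1024 * m ^ 2 * n) ∧
          x = m * bmax / 2 ^ t} ∪ {0} : Set ℝ)) ∧
      (∀ A : Finset (Fin m),
        (∑ e ∈ A, p e) / 2 - bmax / (1024 * n) ≤ ∑ e ∈ A, q e ∧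
        ∑ e ∈ A, q e ≤ ∑ e ∈ A, p e) := by
  have hd : (segs : Set (Finset (Fin m))).PairwiseDisjoint id := hdisj
  have hM : 0 ≤ (m : ℝ) * bmax := by positivity
  set T := Nat.clog 2 (1024 * m ^ 2 * n)
  set θ := (m : ℝ) * bmax / 2 ^ T
  have hq := roundSegments_mem_Icc (T := T) hM hd hp
  refine ⟨roundSegments (m * bmax) T segs p, fun e => hq e, fun s hs => sum_roundSegments_mem hd hs,
    fun A => ⟨?_, sum_le_sum fun e _ => (hq e).2⟩⟩
  have hloss : (#A : ℝ) * θ ≤ bmax / (1024 * n) :=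
    calc (#A : ℝ) * θ ≤ m * θ := by
          gcongr
          simpa using card_le_univ A
      _ ≤ bmax / (1024 * n) := natCast_mul_div_two_pow_clog_le m n hn hb.le
  calc (∑ e ∈ A, p e) / 2 - bmax / (1024 * n) ≤ ∑ e ∈ A, (p e / 2 - θ) := by
        rw [sum_sub_distrib, sum_div, sum_const, nsmul_eq_mul]
        linarith
    _ ≤ _ := sum_le_sum fun e _ => half_sub_le_roundSegments hM hd hp hlen e

/-- Rounding lemma: given nonnegative edge prices on `m` edges, partitioned into
edge-disjoint segments whose lengths (sums of prices) are at most `m·b_max`, the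
prices can be decreased so that every segment length lies in the geometric set
`P = {m·b_max/2^t : 0 ≤ t ≤ ⌈log₂(1024·m²·n)⌉} ∪ {0}`, while the cost of every fixed
set of edges is at most its original cost and at least half the original cost minus
`b_max/(1024·n)`. -/
theorem stmt13 (m n : ℕ) (hm : 1 ≤ m) (hn : 1 ≤ n) (bmax : ℝ) (hb : 0 < bmax)
    (p : Fin m → ℝ) (hp : ∀ e, 0 ≤ p e)
    (segs : Finset (Finset (Fin m)))
    (hdisj : ∀ s ∈ segs, ∀ t ∈ segs, s ≠ t → Disjoint s t)
    (hcover : ∀ e : Fin m, ∃ s ∈ segs, e ∈ s)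
    (hlen : ∀ s ∈ segs, ∑ e ∈ s, p e ≤ m * bmax) :
    ∃ q : Fin m → ℝ, (∀ e, 0 ≤ q e ∧ q e ≤ p e) ∧
      (∀ s ∈ segs, (∑ e ∈ s, q e) ∈
        ({x : ℝ | ∃ t : ℕ, t ≤ Nat.clog 2 (1024 * m ^ 2 * n) ∧
          x = m * bmax / 2 ^ t} ∪ {0} : Set ℝ)) ∧
      (∀ A : Finset (Fin m),
        (∑ e ∈ A, p e) / 2 - bmax / (1024 * n) ≤ ∑ e ∈ A, q e ∧
        ∑ e ∈ A, q e ≤ ∑ e ∈ A, p e) :=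
  stmt13_general m n hn bmax hb p hp segs hdisj hlen
end
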